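/- If (P, L) is an arrangement with L nonempty such that every line of L contains at least two points of P, then P contains at least three points. -/
import Mathlib


/-- A (affine) line in the Euclidean plane `ℝ × ℝ`. -/
def IsLine (ℓ : Set (ℝ × ℝ)) : Prop :=
  ∃ p v : ℝ × ℝ, v ≠ 0 ∧ ℓ = {x : ℝ × ℝ | ∃ t : ℝ, x = p + t • v}

/-- A pair `(P, L)` of a finite set `P` of points and a finite set `L` of lines
in the Euclidean plane is an *arrangement* if (1) every point of `P` lies on at
least two distinct lines of `L`, and (2) the intersection point of any two
distinct lines of `L` belongs to `P`. -/
structure IsArrangement (P : Set (ℝ × ℝ)) (L : Set (Set (ℝ × ℝ))) : Prop where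
  finP : P.Finite
  finL : L.Finite
  lines : ∀ ℓ ∈ L, IsLine ℓ
  rule1 : ∀ x ∈ P, ∃ ℓ₁ ∈ L, ∃ ℓ₂ ∈ L, ℓ₁ ≠ ℓ₂ ∧ x ∈ ℓ₁ ∧ x ∈ ℓ₂
  rule2 : ∀ ℓ₁ ∈ L, ∀ ℓ₂ ∈ L, ℓ₁ ≠ ℓ₂ → ∀ x : ℝ × ℝ, x ∈ ℓ₁ → x ∈ ℓ₂ → x ∈ P

lemma line_eq_of_two_points {ℓ : Set (ℝ × ℝ)} (hℓ : IsLine ℓ) {p q : ℝ × ℝ}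
    (hp : p ∈ ℓ) (hq : q ∈ ℓ) (hpq : p ≠ q) :
    ℓ = {x : ℝ × ℝ | ∃ t : ℝ, x = p + t • (q - p)} := by
  obtain ⟨a, v, hv, rfl⟩ := hℓ
  obtain ⟨s, rfl⟩ := hp
  obtain ⟨u, rfl⟩ := hq
  have hus : u - s ≠ 0 := by
    intro hh
    apply hpq
    have : u = s := by linarith [sub_eq_zero.mp hh]
    rw [this]
  have key : (a + u • v) - (a + s • v) = (u - s) • v := by
    rw [sub_smul]; abel
  ext x
  constructor
  · rintro ⟨t, rfl⟩
    refine ⟨(t - s) / (u - s), ?_⟩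
    rw [key, smul_smul, div_mul_cancel₀ _ hus, sub_smul]
    abel
  · rintro ⟨t, rfl⟩
    refine ⟨s + t * (u - s), ?_⟩
    rw [key, smul_smul, add_smul]
    abel

lemma lines_eq_of_two_points {ℓ₁ ℓ₂ : Set (ℝ × ℝ)} (h1 : IsLine ℓ₁) (h2 : IsLine ℓ₂)
    {p q : ℝ × ℝ} (hpq : p ≠ q) (hp1 : p ∈ ℓ₁) (hq1 : q ∈ ℓ₁) (hp2 : p ∈ ℓ₂) (hq2 : q ∈ ℓ₂) :
    ℓ₁ = ℓ₂ := by
  rw [line_eq_of_two_points h1 hp1 hq1 hpq, line_eq_of_two_points h2 hp2 hq2 hpq]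

/-- If `(P, L)` is an arrangement with `L` nonempty in which every line of `L` contains
at least two points of `P`, then `P` contains at least three points. -/
theorem arrangement_point_line_geometry_three_points
    (P : Set (ℝ × ℝ)) (L : Set (Set (ℝ × ℝ))) (h : IsArrangement P L)
    (hL : L.Nonempty)
    (hi : ∀ ℓ ∈ L, ∃ p ∈ P, ∃ q ∈ P, p ≠ q ∧ p ∈ ℓ ∧ q ∈ ℓ) :
    ∃ p ∈ P, ∃ q ∈ P, ∃ r ∈ P, p ≠ q ∧ p ≠ r ∧ q ≠ r := by
  obtain ⟨ℓ, hℓL⟩ := hL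
  obtain ⟨p, hpP, q, hqP, hpq, hpℓ, hqℓ⟩ := hi ℓ hℓL
  obtain ⟨ℓ₁, h1, ℓ₂, h2, h12, hp1, hp2⟩ := h.rule1 p hpP
  have hex : ∃ ℓ' ∈ L, ℓ' ≠ ℓ ∧ p ∈ ℓ' := by
    by_cases hc : ℓ₁ = ℓ
    · exact ⟨ℓ₂, h2, by rw [← hc]; exact h12.symm, hp2⟩
    · exact ⟨ℓ₁, h1, hc, hp1⟩
  obtain ⟨ℓ', hℓ'L, hne, hpℓ'⟩ := hex
  obtain ⟨a, haP, b, hbP, hab, haℓ', hbℓ'⟩ := hi ℓ' hℓ'L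
  have hr : ∃ r ∈ P, r ≠ p ∧ r ∈ ℓ' := by
    by_cases hc : a = p
    · exact ⟨b, hbP, by rw [← hc]; exact hab.symm, hbℓ'⟩
    · exact ⟨a, haP, hc, haℓ'⟩
  obtain ⟨r, hrP, hrp, hrℓ'⟩ := hr
  refine ⟨p, hpP, q, hqP, r, hrP, hpq, hrp.symm, ?_⟩
  intro hqr
  subst hqr
  exact hne (lines_eq_of_two_points (h.lines ℓ' hℓ'L) (h.lines ℓ hℓL) hpq hpℓ' hrℓ' hpℓ hqℓ)
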